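/- Let n ≥ 3 be an integer and let z ∈ C²(ℝ) solve the Emden-type ODE z̈(t) + (n−4+2z(t))·ż(t) − 2(n−2)·(z(t)−z(t)²) = 0 for all t ∈ ℝ, and suppose there exists C < ∞ with 0 < z(t) < C and |ż(t)| < C for all t ∈ ℝ. Let a, b ∈ ℝ with (a,b) ≠ (0,0), and suppose lim_{t→∞} (a·z(t)+b)·ż(t)² = 0. Then ż(t) converges as t → ∞ and lim_{t→∞} ż(t) = 0. -/

import Mathlib

open Set Filter

set_option maxHeartbeats 1600000

noncomputable section

def EmdenODE (n : ℕ) (z : ℝ → ℝ) : Prop :=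
  ∀ t : ℝ, deriv (deriv z) t + ((n : ℝ) - 4 + 2 * z t) * deriv z t
    - 2 * ((n : ℝ) - 2) * (z t - (z t) ^ 2) = 0

lemma sq_tendsto_zero {f : ℝ → ℝ} (h : Tendsto (fun t => (f t)^2) atTop (nhds 0)) :
    Tendsto f atTop (nhds 0) := by
  have h1 : Tendsto (fun t => |f t|) atTop (nhds 0) := by
    have h2 := (Real.continuous_sqrt.tendsto 0).comp h
    rw [Real.sqrt_zero] at h2
    exact h2.congr (fun t => by simp [Real.sqrt_sq_eq_abs])
  exact squeeze_zero_norm (fun t => le_refl |f t|) h1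

theorem stmt13 (n : ℕ) (hn : 3 ≤ n) (z : ℝ → ℝ) (hz : ContDiff ℝ 2 z)
    (hode : EmdenODE n z)
    (C : ℝ) (hbd : ∀ t : ℝ, 0 < z t ∧ z t < C ∧ |deriv z t| < C)
    (a b : ℝ) (hab : a ≠ 0 ∨ b ≠ 0)
    (hlim : Tendsto (fun t => (a * z t + b) * (deriv z t) ^ 2) atTop (nhds 0)) :
    Tendsto (deriv z) atTop (nhds 0) := by
  have hzdiff : Differentiable ℝ z := hz.differentiable two_ne_zero
  have hz'cont : Continuous (deriv z) := hz.continuous_deriv one_le_two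
  have hz2 : ContDiff ℝ 1 (deriv z) :=
    (contDiff_succ_iff_deriv.mp (show ContDiff ℝ (1+1) z by norm_num; exact hz)).2.2
  have hz'diff : Differentiable ℝ (deriv z) := hz2.differentiable one_ne_zero
  have hC : 0 < C := lt_trans (hbd 0).1 (hbd 0).2.1
  -- handle the a = 0 case
  rcases eq_or_ne a 0 with ha | ha
  · subst ha
    have hb : b ≠ 0 := hab.resolve_left (fun h => h rfl)
    apply sq_tendsto_zero
    have h2 := hlim.const_mul b⁻¹
    rw [mul_zero] at h2
    exact h2.congr (fun t => by field_simp; ring)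
  -- bound the second derivative
  set M : ℝ := 2*((n:ℝ)+2)*(C + C^2) + ((n:ℝ) + 4 + 2*C)*C with hMdef
  have hn3 : (3:ℝ) ≤ (n:ℝ) := by exact_mod_cast hn
  have hM : 0 < M := by positivity
  have hMb : ∀ t, |deriv (deriv z) t| ≤ M := by
    intro t
    have h := hode t
    obtain ⟨h1, h2, h3⟩ := hbd t
    have h4 : -C < deriv z t ∧ deriv z t < C := abs_lt.mp h3
    have he : deriv (deriv z) t
        = 2*((n:ℝ)-2)*(z t - z t^2) - ((n:ℝ)-4+2*z t)*deriv z t := by linarith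
    have hzC2 : z t ^ 2 < C ^ 2 := by
      nlinarith [mul_pos (show (0:ℝ) < C - z t by linarith) (show (0:ℝ) < C + z t by linarith)]
    have b1 : |z t - z t^2| ≤ C + C^2 := by
      rw [abs_le]; constructor <;> nlinarith [sq_nonneg (z t)]
    have b2 : |(n:ℝ)-4+2*z t| ≤ (n:ℝ)+4+2*C := by
      rw [abs_le]; constructor <;> nlinarith
    rw [he]
    calc |2*((n:ℝ)-2)*(z t - z t^2) - ((n:ℝ)-4+2*z t)*deriv z t|
        ≤ |2*((n:ℝ)-2)*(z t - z t^2)| + |((n:ℝ)-4+2*z t)*deriv z t| := abs_sub _ _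
      _ = 2*((n:ℝ)-2)*|z t - z t^2| + |(n:ℝ)-4+2*z t| * |deriv z t| := by
          rw [abs_mul, abs_mul, abs_mul, abs_of_nonneg (by norm_num : (0:ℝ) ≤ 2),
            abs_of_nonneg (by linarith : (0:ℝ) ≤ (n:ℝ)-2)]
      _ ≤ M := by
          nlinarith [mul_le_mul_of_nonneg_left b1 (by linarith : (0:ℝ) ≤ 2*((n:ℝ)-2)),
            mul_le_mul b2 h3.le (abs_nonneg _) (by linarith : (0:ℝ) ≤ (n:ℝ)+4+2*C),
            abs_nonneg (z t - z t^2), abs_nonneg (deriv z t)]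
  -- deriv z is M-Lipschitz
  have hlip : ∀ s t : ℝ, |deriv z s - deriv z t| ≤ M * |s - t| := by
    intro s t
    have := Convex.norm_image_sub_le_of_norm_deriv_le
      (f := deriv z) (s := (univ : Set ℝ)) (C := M)
      (fun x _ => (hz'diff x)) (fun x _ => by simpa using hMb x)
      convex_univ (mem_univ t) (mem_univ s)
    simpa [Real.norm_eq_abs] using this
  -- by contradiction
  by_contra hcon
  rw [Metric.tendsto_atTop] at hcon
  push_neg at hcon
  obtain ⟨ε, hε, hcon⟩ := hcon
  set δ : ℝ := ε / (2 * M) with hδdef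
  have hδ : 0 < δ := by positivity
  -- from hlim, eventually small
  have hεd4 : 0 < |a| * δ * ε / 4 * (ε^2/4) := by positivity
  rw [Metric.tendsto_atTop] at hlim
  obtain ⟨T, hT⟩ := hlim (|a| * δ * ε / 4 * (ε^2/4)) hεd4
  obtain ⟨t₀, ht₀T, ht₀⟩ := hcon (T + δ)
  rw [Real.dist_eq, sub_zero] at ht₀
  -- on [t₀ - δ, t₀ + δ], |deriv z| ≥ ε/2 with constant sign
  have hsmall : ∀ s ∈ Icc (t₀ - δ) (t₀ + δ), |deriv z s - deriv z t₀| ≤ ε / 2 := by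
    intro s hs
    have h1 : |s - t₀| ≤ δ := by
      rw [abs_le]; constructor <;> [linarith [hs.1]; linarith [hs.2]]
    calc |deriv z s - deriv z t₀| ≤ M * |s - t₀| := hlip s t₀
      _ ≤ M * δ := by nlinarith
      _ = ε / 2 := by rw [hδdef]; field_simp [hM.ne']
  -- |a z + b| small on interval
  have hzsmall : ∀ s ∈ Icc (t₀ - δ) (t₀ + δ), |a * z s + b| < |a| * δ * ε / 4 := by
    intro s hs
    have hsge : T ≤ s := by linarith [hs.1]
    have := hT s hsge
    rw [Real.dist_eq, sub_zero, abs_mul, abs_pow, sq_abs] at this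
    have hds : ε / 2 ≤ |deriv z s| := by
      have := hsmall s hs
      have := abs_sub_abs_le_abs_sub (deriv z s) (deriv z t₀)
      have h2 := abs_sub_abs_le_abs_sub (deriv z t₀) (deriv z s)
      rw [abs_sub_comm] at h2
      linarith [hsmall s hs]
    have hds2 : ε^2/4 ≤ (deriv z s)^2 := by
      have := sq_abs (deriv z s)
      nlinarith
    have h5 : |a * z s + b| * (ε^2/4) ≤ |a * z s + b| * (deriv z s)^2 :=
      mul_le_mul_of_nonneg_left hds2 (abs_nonneg _)
    have h6 : |a * z s + b| * (ε^2/4) < |a| * δ * ε / 4 * (ε^2/4) := lt_of_le_of_lt h5 this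
    exact lt_of_mul_lt_mul_right h6 (by positivity)
  -- FTC: z(t₀+δ) - z(t₀-δ) = ∫ deriv z
  have hftc : ∫ s in (t₀ - δ)..(t₀ + δ), deriv z s = z (t₀ + δ) - z (t₀ - δ) :=
    intervalIntegral.integral_deriv_eq_sub (fun x _ => (hzdiff x))
      (hz'cont.intervalIntegrable _ _)
  have hint : δ * ε ≤ |z (t₀ + δ) - z (t₀ - δ)| := by
    have hle : t₀ - δ ≤ t₀ + δ := by linarith
    rcases le_or_gt ε (deriv z t₀) with hpos | hneg
    · -- deriv z ≥ ε/2 on interval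
      have hlow : ∀ s ∈ Icc (t₀ - δ) (t₀ + δ), ε/2 ≤ deriv z s := by
        intro s hs
        have := hsmall s hs
        have := abs_le.mp this
        linarith [this.1]
      have h5 := intervalIntegral.integral_mono_on (μ := MeasureTheory.volume) hle
          (intervalIntegrable_const (c := ε/2)) (hz'cont.intervalIntegrable _ _) hlow
      simp only [intervalIntegral.integral_const, smul_eq_mul] at h5
      rw [hftc] at h5
      have heq : ((t₀ + δ) - (t₀ - δ)) * (ε/2) = δ * ε := by ring
      have h1 : δ * ε ≤ z (t₀ + δ) - z (t₀ - δ) := by rw [← heq]; linarith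
      calc δ * ε ≤ z (t₀ + δ) - z (t₀ - δ) := h1
        _ ≤ |z (t₀ + δ) - z (t₀ - δ)| := le_abs_self _
    · -- deriv z t₀ ≤ -ε
      have hneg' : deriv z t₀ ≤ -ε := by
        rcases le_abs.mp ht₀ with h | h
        · linarith
        · linarith
      have hup : ∀ s ∈ Icc (t₀ - δ) (t₀ + δ), deriv z s ≤ -(ε/2) := by
        intro s hs
        have := abs_le.mp (hsmall s hs)
        linarith [this.2]
      have h5 := intervalIntegral.integral_mono_on (μ := MeasureTheory.volume) hle
          (hz'cont.intervalIntegrable _ _) (intervalIntegrable_const (c := -(ε/2))) hup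
      simp only [intervalIntegral.integral_const, smul_eq_mul] at h5
      rw [hftc] at h5
      have heq : ((t₀ + δ) - (t₀ - δ)) * (-(ε/2)) = -(δ * ε) := by ring
      have h1 : z (t₀ + δ) - z (t₀ - δ) ≤ -(δ * ε) := by rw [← heq]; linarith
      calc δ * ε ≤ -(z (t₀ + δ) - z (t₀ - δ)) := by linarith
        _ ≤ |z (t₀ + δ) - z (t₀ - δ)| := neg_le_abs _
  -- but z near -b/a at both endpoints gives |Δz| < δε/2
  have hend : ∀ s ∈ Icc (t₀ - δ) (t₀ + δ), |z s + b / a| < δ * ε / 4 := by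
    intro s hs
    have h0 := hzsmall s hs
    have ha' : 0 < |a| := abs_pos.mpr ha
    have h1 : a * (z s + b / a) = a * z s + b := by field_simp
    have h2 : |a| * |z s + b/a| < |a| * (δ * ε / 4) := by
      rw [← abs_mul, h1]
      calc |a * z s + b| < |a| * δ * ε / 4 := h0
        _ = |a| * (δ * ε / 4) := by ring
    exact (mul_lt_mul_iff_right₀ ha').mp h2
  have h1 := hend (t₀ + δ) ⟨by linarith, le_refl _⟩
  have h2 := hend (t₀ - δ) ⟨le_refl _, by linarith⟩
  have h3 : |z (t₀ + δ) - z (t₀ - δ)| < δ * ε / 2 := by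
    have := abs_sub (z (t₀ + δ) + b/a) (z (t₀ - δ) + b/a)
    have h4 : |z (t₀ + δ) - z (t₀ - δ)| = |(z (t₀ + δ) + b/a) - (z (t₀ - δ) + b/a)| := by
      congr 1; ring
    rw [h4]
    calc |(z (t₀ + δ) + b/a) - (z (t₀ - δ) + b/a)|
        ≤ |z (t₀ + δ) + b/a| + |z (t₀ - δ) + b/a| := abs_sub _ _
      _ < δ * ε / 2 := by linarith
  nlinarith [hδ, hε]

end
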